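/- arXiv:2111.08107 — 4 statements merged into one kernel-verified Lean document; each statement's English description precedes it below -/
import Mathlib

section
/- If v ∈ 𝒦 ∖ 𝒴_μ and μ > μ₀, then C_v^+ ∩ 𝒦 ⊂ 𝒦 ∖ 𝒴_μ. -/
open Metric Set Filter Bornology
open scoped RealInnerProductSpace

noncomputable section

/-- The closed half-cone `C_v^-` with vertex `v`, axis containing the ray from `v`
through `0`, and aperture `α ∈ (0, π/2)` determined by `sin α = r₀/‖v‖`. -/
def Cminus (q : ℕ) (r₀ : ℝ) (v : EuclideanSpace ℝ (Fin q)) :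
    Set (EuclideanSpace ℝ (Fin q)) :=
  {w | Real.sqrt (1 - r₀ ^ 2 / ‖v‖ ^ 2) * (‖w - v‖ * ‖v‖) ≤ ⟪w - v, -v⟫}

/-- The cone `C_v^+ = {v + ξ : v - ξ ∈ C_v^-}`, the reflection of `C_v^-` about `v`. -/
def Cplus (q : ℕ) (r₀ : ℝ) (v : EuclideanSpace ℝ (Fin q)) :
    Set (EuclideanSpace ℝ (Fin q)) :=
  {w | (2 : ℝ) • v - w ∈ Cminus q r₀ v}

/-- The map `G(x) = g(x/|x|) x` (with `G(0) = 0`, which holds automatically since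
`‖0‖⁻¹ • 0 = 0` and `g(0) • 0 = 0`). -/
def Gmap (q : ℕ) (g : EuclideanSpace ℝ (Fin q) → ℝ)
    (x : EuclideanSpace ℝ (Fin q)) : EuclideanSpace ℝ (Fin q) :=
  g (‖x‖⁻¹ • x) • x

/-- The open convex sets `𝒴_μ = G(B_μ(0))`. -/
def Ymu (q : ℕ) (g : EuclideanSpace ℝ (Fin q) → ℝ) (μ : ℝ) :
    Set (EuclideanSpace ℝ (Fin q)) :=
  Gmap q g '' ball (0 : EuclideanSpace ℝ (Fin q)) μ

/-- `Ymu` is the open sublevel set of the gauge of `K`. -/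
lemma Ymu_eq_gauge_lt (q : ℕ) (K : Set (EuclideanSpace ℝ (Fin q)))
    (hKopen : IsOpen K) (hKconv : Convex ℝ K)
    (h0K : (0 : EuclideanSpace ℝ (Fin q)) ∈ K)
    (g : EuclideanSpace ℝ (Fin q) → ℝ)
    (hgpos : ∀ ν ∈ sphere (0 : EuclideanSpace ℝ (Fin q)) 1, 0 < g ν)
    (hgbdry : ∀ ν ∈ sphere (0 : EuclideanSpace ℝ (Fin q)) 1, g ν • ν ∈ frontier K)
    (μ' : ℝ) (hμ' : 0 < μ') :
    Ymu q g μ' = {w | gauge K w < μ'} := by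
  have hK0 : K ∈ nhds (0 : EuclideanSpace ℝ (Fin q)) := hKopen.mem_nhds h0K
  have hgauge_nu : ∀ ν ∈ sphere (0 : EuclideanSpace ℝ (Fin q)) 1,
      gauge K ν = (g ν)⁻¹ := by
    intro ν hν
    have h1 : gauge K (g ν • ν) = 1 :=
      (gauge_eq_one_iff_mem_frontier hKconv hK0).2 (hgbdry ν hν)
    rw [gauge_smul_of_nonneg (hgpos ν hν).le, smul_eq_mul] at h1
    field_simp [(hgpos ν hν).ne']
    linarith [h1]
  ext w
  constructor
  · rintro ⟨x, hx, rfl⟩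
    rw [mem_ball_zero_iff] at hx
    by_cases hx0 : x = 0
    · subst hx0
      simp [Gmap, gauge_zero, hμ']
    · set ν := ‖x‖⁻¹ • x with hνdef
      have hxn : (0:ℝ) < ‖x‖ := norm_pos_iff.2 hx0
      have hν : ν ∈ sphere (0 : EuclideanSpace ℝ (Fin q)) 1 := by
        simp [hνdef, norm_smul, abs_of_nonneg (inv_nonneg.2 hxn.le),
          inv_mul_cancel₀ hxn.ne']
      have hxν : x = ‖x‖ • ν := by
        rw [hνdef, smul_smul, mul_inv_cancel₀ hxn.ne', one_smul]
      show gauge K (Gmap q g x) < μ'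
      rw [Gmap]
      calc gauge K (g ν • x) = g ν * gauge K x := by
            rw [gauge_smul_of_nonneg (hgpos ν hν).le, smul_eq_mul]
        _ = g ν * (‖x‖ * gauge K ν) := by
            conv_lhs => rw [hxν, gauge_smul_of_nonneg (norm_nonneg x), smul_eq_mul]
        _ = ‖x‖ * (g ν * (g ν)⁻¹) := by rw [hgauge_nu ν hν]; ring
        _ = ‖x‖ := by rw [mul_inv_cancel₀ (hgpos ν hν).ne', mul_one]
        _ < μ' := hx
  · intro hw
    by_cases hw0 : w = 0
    · subst hw0
      exact ⟨0, by simpa using hμ', by simp [Gmap]⟩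
    · have hwn : (0:ℝ) < ‖w‖ := norm_pos_iff.2 hw0
      set ν := ‖w‖⁻¹ • w with hνdef
      have hν : ν ∈ sphere (0 : EuclideanSpace ℝ (Fin q)) 1 := by
        simp [hνdef, norm_smul, abs_of_nonneg (inv_nonneg.2 hwn.le),
          inv_mul_cancel₀ hwn.ne']
      have hgν : (0:ℝ) < g ν := hgpos ν hν
      have hwν : w = ‖w‖ • ν := by
        rw [hνdef, smul_smul, mul_inv_cancel₀ hwn.ne', one_smul]
      have hnν : ‖ν‖ = 1 := by simpa using hν
      refine ⟨(‖w‖ / g ν) • ν, ?_, ?_⟩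
      · rw [mem_ball_zero_iff, norm_smul, hnν, mul_one, Real.norm_eq_abs,
          abs_of_pos (div_pos hwn hgν)]
        have hgw : gauge K w = ‖w‖ / g ν := by
          conv_lhs => rw [hwν, gauge_smul_of_nonneg (norm_nonneg w), smul_eq_mul]
          rw [hgauge_nu ν hν, div_eq_mul_inv]
        rw [← hgw]; exact hw
      · have hc : (0:ℝ) < ‖w‖ / g ν := div_pos hwn hgν
        have hnorm : ‖(‖w‖ / g ν) • ν‖ = ‖w‖ / g ν := by
          rw [norm_smul, hnν, mul_one, Real.norm_eq_abs, abs_of_pos hc]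
        rw [Gmap, hnorm, inv_smul_smul₀ hc.ne', smul_smul,
          show g ν * (‖w‖ / g ν) = ‖w‖ by field_simp, ← hwν]

/-- If `v ∈ 𝒦 ∖ 𝒴_μ` and `μ > μ₀`, then `C_v^+ ∩ 𝒦 ⊆ 𝒦 ∖ 𝒴_μ`. -/
theorem conePlus_inter_subset_compl_Ymu
    (q : ℕ) (hq : 2 ≤ q) (K : Set (EuclideanSpace ℝ (Fin q)))
    (hKopen : IsOpen K) (hKbd : IsBounded K) (hKconv : Convex ℝ K)
    (h0K : (0 : EuclideanSpace ℝ (Fin q)) ∈ K)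
    (g : EuclideanSpace ℝ (Fin q) → ℝ) (L : NNReal)
    (hgLip : LipschitzOnWith L g (sphere (0 : EuclideanSpace ℝ (Fin q)) 1))
    (hgpos : ∀ ν ∈ sphere (0 : EuclideanSpace ℝ (Fin q)) 1, 0 < g ν)
    (hgbdry : ∀ ν ∈ sphere (0 : EuclideanSpace ℝ (Fin q)) 1, g ν • ν ∈ frontier K)
    (hgsurj : ∀ w ∈ frontier K,
      ∃ ν ∈ sphere (0 : EuclideanSpace ℝ (Fin q)) 1, w = g ν • ν)
    (r₀ : ℝ) (hr₀ : 0 < r₀)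
    (μ₀ : ℝ) (hμ₀ : μ₀ ∈ Ioo (0 : ℝ) 1)
    (hball : closedBall (0 : EuclideanSpace ℝ (Fin q)) r₀ ⊆ Ymu q g μ₀)
    (μ : ℝ) (hμ : μ₀ < μ) (hμ1 : μ < 1)
    (v : EuclideanSpace ℝ (Fin q)) (hv : v ∈ K \ Ymu q g μ) :
    Cplus q r₀ v ∩ K ⊆ K \ Ymu q g μ := by
  have hK0 : K ∈ nhds (0 : EuclideanSpace ℝ (Fin q)) := hKopen.mem_nhds h0K
  have habs : Absorbent ℝ K := absorbent_nhds_zero hK0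
  have hμpos : (0:ℝ) < μ := hμ₀.1.trans hμ
  have hYeq : Ymu q g μ = {w | gauge K w < μ} :=
    Ymu_eq_gauge_lt q K hKopen hKconv h0K g hgpos hgbdry μ hμpos
  -- convexity of `Ymu q g μ`
  have hYconv : Convex ℝ (Ymu q g μ) := by
    rw [hYeq]
    intro x hx y hy a b ha hb hab
    show gauge K (a • x + b • y) < μ
    rcases ha.eq_or_lt with ha0 | ha0
    · have hb1 : b = 1 := by linarith
      subst hb1
      simp only [← ha0, zero_smul, one_smul, zero_add]
      exact hy
    · have hax : gauge K (a • x) < a * μ := by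
        rw [gauge_smul_of_nonneg ha, smul_eq_mul]
        exact (mul_lt_mul_iff_right₀ ha0).2 hx
      have hby : gauge K (b • y) ≤ b * μ := by
        rw [gauge_smul_of_nonneg hb, smul_eq_mul]
        exact mul_le_mul_of_nonneg_left (le_of_lt hy) hb
      have h1 := gauge_add_le hKconv habs (a • x) (b • y)
      nlinarith
  have hsub : Ymu q g μ₀ ⊆ Ymu q g μ :=
    image_mono (ball_subset_ball hμ.le)
  have hballμ : closedBall (0 : EuclideanSpace ℝ (Fin q)) r₀ ⊆ Ymu q g μ :=
    hball.trans hsub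
  have hvY : v ∉ Ymu q g μ := hv.2
  have hvr : r₀ < ‖v‖ := by
    by_contra h
    exact hvY (hballμ (mem_closedBall_zero_iff.2 (not_lt.1 h)))
  have hvpos : (0:ℝ) < ‖v‖ := hr₀.trans hvr
  rintro w ⟨hwC, hwK⟩
  refine ⟨hwK, fun hwY => hvY ?_⟩
  by_cases hwv : w = v
  · subst hwv; exact hwY
  set c : ℝ := Real.sqrt (1 - r₀ ^ 2 / ‖v‖ ^ 2) with hcdef
  have hfrac : r₀ ^ 2 / ‖v‖ ^ 2 < 1 := by
    rw [div_lt_one (by positivity)]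
    exact pow_lt_pow_left₀ hvr hr₀.le two_ne_zero
  have hc2 : c ^ 2 = 1 - r₀ ^ 2 / ‖v‖ ^ 2 := Real.sq_sqrt (by linarith)
  have hcpos : (0:ℝ) < c := Real.sqrt_pos.2 (by linarith)
  -- the cone condition at `w`
  have hCond : c * (‖v - w‖ * ‖v‖) ≤ ⟪v - w, -v⟫ := by
    have h2 : (2 : ℝ) • v - w - v = v - w := by
      rw [two_smul]; abel
    have := hwC
    simp only [Cplus, Cminus, mem_setOf_eq, h2] at this
    exact this
  set u : EuclideanSpace ℝ (Fin q) := v - w with hudef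
  have hu0 : u ≠ 0 := sub_ne_zero.2 fun h => hwv h.symm
  have hun : (0:ℝ) < ‖u‖ := norm_pos_iff.2 hu0
  set d : EuclideanSpace ℝ (Fin q) := ‖u‖⁻¹ • u with hddef
  have hnd : ‖d‖ = 1 := by
    rw [hddef, norm_smul, Real.norm_eq_abs, abs_of_nonneg (inv_nonneg.2 hun.le),
      inv_mul_cancel₀ hun.ne']
  have hud : u = ‖u‖ • d := by
    rw [hddef, smul_smul, mul_inv_cancel₀ hun.ne', one_smul]
  set t : ℝ := ⟪d, -v⟫ with htdef
  have ht : c * ‖v‖ ≤ t := by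
    have h1 : t = ‖u‖⁻¹ * ⟪u, -v⟫ := by
      rw [htdef, hddef, real_inner_smul_left]
    have h2 : c * (‖u‖ * ‖v‖) ≤ ⟪u, -v⟫ := hCond
    rw [h1]
    calc c * ‖v‖ = ‖u‖⁻¹ * (c * (‖u‖ * ‖v‖)) := by
          field_simp [hun.ne']
      _ ≤ ‖u‖⁻¹ * ⟪u, -v⟫ := mul_le_mul_of_nonneg_left h2 (inv_nonneg.2 hun.le)
  have htpos : (0:ℝ) < t := lt_of_lt_of_le (by positivity) ht
  set z : EuclideanSpace ℝ (Fin q) := v + t • d with hzdef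
  have hvd : ⟪v, d⟫ = -t := by
    rw [htdef, inner_neg_right, real_inner_comm, neg_neg]
  have hz2 : ‖z‖ ^ 2 = ‖v‖ ^ 2 - t ^ 2 := by
    rw [hzdef, norm_add_sq_real, real_inner_smul_right, hvd, norm_smul,
      Real.norm_eq_abs, hnd]
    have : |t| = t := abs_of_pos htpos
    rw [this]; ring
  have hzr : ‖z‖ ≤ r₀ := by
    have ht2 : (c * ‖v‖) ^ 2 ≤ t ^ 2 := by
      apply pow_le_pow_left₀ (by positivity) ht
    have hcv : (c * ‖v‖) ^ 2 = ‖v‖ ^ 2 - r₀ ^ 2 := by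
      rw [mul_pow, hc2]
      field_simp
    nlinarith [norm_nonneg z]
  have hzY : z ∈ Ymu q g μ := hballμ (mem_closedBall_zero_iff.2 hzr)
  -- convex combination
  set a : ℝ := t / (t + ‖u‖) with hadef
  set b : ℝ := ‖u‖ / (t + ‖u‖) with hbdef
  have hden : (0:ℝ) < t + ‖u‖ := by positivity
  have hab : a + b = 1 := by
    rw [hadef, hbdef, ← add_div, div_self hden.ne']
  have hbt : b * t = a * ‖u‖ := by
    rw [hadef, hbdef]; field_simp
  have hwvd : w = v - ‖u‖ • d := by
    rw [← hud, hudef]; abel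
  have hcomb : a • w + b • z = v := by
    clear_value a b z t d u c
    rw [hwvd, hzdef]
    have expand : a • (v - ‖u‖ • d) + b • (v + t • d)
        = (a + b) • v + (b * t - a * ‖u‖) • d := by
      rw [smul_sub, smul_add, add_smul, sub_smul, smul_smul, smul_smul]
      abel
    rw [expand, hab, one_smul, hbt, sub_self, zero_smul, add_zero]
  rw [← hcomb]
  exact hYconv hwY hzY (le_of_lt (div_pos htpos hden)) (le_of_lt (div_pos hun hden)) hab
end
end

section
/- For any v in 𝒦 ∖ 𝒴_{μ₁} and any w in C_v^+ ∩ 𝒦 with w ≠ v, one has ∇f₀(w) · (w − v) > 0. -/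
open Metric Set Filter Bornology
open scoped RealInnerProductSpace

noncomputable section

/-- Gradient inequality for a convex differentiable function. -/
lemma fderiv_le_of_convexOn {E : Type*} [NormedAddCommGroup E] [NormedSpace ℝ E]
    {s : Set E} {F : E → ℝ} (hF : ConvexOn ℝ s F) {x y : E}
    (hx : x ∈ s) (hy : y ∈ s) (hd : DifferentiableAt ℝ F x) :
    fderiv ℝ F x (y - x) ≤ F y - F x := by
  set φ : ℝ → E := fun t => x + t • (y - x) with hφ_def
  have hφ : HasDerivAt φ (y - x) 0 := by
    simpa [hφ_def] using ((hasDerivAt_id (0:ℝ)).smul_const (y - x)).const_add x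
  have h1 : HasFDerivAt F (fderiv ℝ F x) (φ 0) := by
    simp only [hφ_def, zero_smul, add_zero]
    exact hd.hasFDerivAt
  have hg : HasDerivAt (F ∘ φ) (fderiv ℝ F x (y - x)) 0 := h1.comp_hasDerivAt 0 hφ
  have hslope : Tendsto (slope (F ∘ φ) 0) (nhdsWithin 0 (Set.Ioi 0))
      (nhds (fderiv ℝ F x (y - x))) :=
    (hasDerivAt_iff_tendsto_slope.1 hg).mono_left
      (nhdsWithin_mono 0 fun t ht => ne_of_gt ht)
  refine le_of_tendsto hslope ?_
  filter_upwards [Ioo_mem_nhdsGT_of_mem (Set.mem_Ico.2 ⟨le_refl (0:ℝ), one_pos⟩)] with t ht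
  have hmem : (1 - t) • x + t • y = φ t := by simp only [hφ_def]; module
  have hle : F (φ t) ≤ (1 - t) * F x + t * F y := by
    rw [← hmem]; exact hF.2 hx hy (by linarith [ht.2]) ht.1.le (by ring)
  have ht0 : (0:ℝ) < t := ht.1
  have hφ0 : φ 0 = x := by simp [hφ_def]
  rw [slope_def_field]
  rw [sub_zero, div_le_iff₀ ht0]
  simp only [Function.comp_apply, hφ0]
  nlinarith [hle]

/-- The sets `𝒴_μ` are contained in `K` for `μ ≤ 1`. -/
lemma Ymu_subset_K {q : ℕ} {K : Set (EuclideanSpace ℝ (Fin q))}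
    (hKopen : IsOpen K) (hKconv : Convex ℝ K)
    (h0K : (0 : EuclideanSpace ℝ (Fin q)) ∈ K)
    {g : EuclideanSpace ℝ (Fin q) → ℝ}
    (hgbdry : ∀ ν ∈ sphere (0 : EuclideanSpace ℝ (Fin q)) 1, g ν • ν ∈ frontier K)
    {μ : ℝ} (hμ : μ ≤ 1) : Ymu q g μ ⊆ K := by
  rintro y ⟨x, hx, rfl⟩
  rw [mem_ball, dist_zero_right] at hx
  by_cases hx0 : x = 0
  · simpa [Gmap, hx0] using h0K
  · have hxn : ‖x‖ ≠ 0 := norm_ne_zero_iff.2 hx0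
    set ν : EuclideanSpace ℝ (Fin q) := ‖x‖⁻¹ • x with hν_def
    have hν : ν ∈ sphere (0 : EuclideanSpace ℝ (Fin q)) 1 := by
      simp [hν_def, norm_smul, abs_of_nonneg (inv_nonneg.2 (norm_nonneg x)),
        inv_mul_cancel₀ hxn]
    have hz := hgbdry ν hν
    have hxν : ‖x‖ • ν = x := smul_inv_smul₀ hxn x
    have hGy : Gmap q g x = ‖x‖ • (g ν • ν) := by
      rw [Gmap, ← hν_def]
      conv_lhs => rw [← hxν]
      rw [smul_comm]
    have h0int : (0 : EuclideanSpace ℝ (Fin q)) ∈ interior K := by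
      rw [hKopen.interior_eq]; exact h0K
    have hcmb := hKconv.combo_interior_closure_mem_interior h0int
      (frontier_subset_closure hz) (a := 1 - ‖x‖) (b := ‖x‖)
      (by linarith [lt_of_lt_of_le hx hμ]) (norm_nonneg x) (by ring)
    rw [smul_zero, zero_add] at hcmb
    rw [hGy, ← hKopen.interior_eq]
    exact hcmb


private lemma arith_pos_of_combo {θ Fu Fv Fw s₀ : ℝ} (hθ : 0 < θ)
    (hfv : 1 + s₀ ≤ Fv) (hcx : Fv ≤ (1 - θ) * Fu + θ * Fw) (hu : Fu ≤ s₀) :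
    0 < Fw - Fu := by
  by_contra h
  push_neg at h
  have h1 : θ * (Fw - Fu) ≤ 0 := mul_nonpos_of_nonneg_of_nonpos hθ.le h
  nlinarith

private lemma arith_final {X b Fu Fw : ℝ} (hb : 0 < b)
    (h : -b * X ≤ Fu - Fw) (hpos : 0 < Fw - Fu) : 0 < X := by
  by_contra h'
  push_neg at h'
  nlinarith [mul_nonneg hb.le (neg_nonneg.2 h')]

set_option maxHeartbeats 1000000 in
/-- For any `v ∈ 𝒦 ∖ 𝒴_{μ₁}` and any `w ∈ C_v^+ ∩ 𝒦` with `w ≠ v`,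
one has `∇f₀(w) · (w - v) > 0`, where `f₀(w) = f(w) + (M/2)|w|²` is the convex
function associated with `f`. -/
theorem grad_inner_pos_on_conePlus
    (q : ℕ) (hq : 2 ≤ q) (K : Set (EuclideanSpace ℝ (Fin q)))
    (hKopen : IsOpen K) (hKbd : IsBounded K) (hKconv : Convex ℝ K)
    (h0K : (0 : EuclideanSpace ℝ (Fin q)) ∈ K)
    (g : EuclideanSpace ℝ (Fin q) → ℝ) (L : NNReal)
    (hgLip : LipschitzOnWith L g (sphere (0 : EuclideanSpace ℝ (Fin q)) 1))
    (hgpos : ∀ ν ∈ sphere (0 : EuclideanSpace ℝ (Fin q)) 1, 0 < g ν)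
    (hgbdry : ∀ ν ∈ sphere (0 : EuclideanSpace ℝ (Fin q)) 1, g ν • ν ∈ frontier K)
    (hgsurj : ∀ w ∈ frontier K,
      ∃ ν ∈ sphere (0 : EuclideanSpace ℝ (Fin q)) 1, w = g ν • ν)
    (f : EuclideanSpace ℝ (Fin q) → ℝ) (hf : ContDiffOn ℝ 2 f K)
    (M : ℝ) (hM : 0 ≤ M)
    (hconv : ConvexOn ℝ K (fun w => f w + (M / 2) * ‖w‖ ^ 2))
    (hblow : ∀ z ∈ frontier K, Filter.Tendsto f (nhdsWithin z K) Filter.atTop)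
    (r₀ : ℝ) (hr₀ : 0 < r₀)
    (μ₀ : ℝ) (hμ₀ : μ₀ ∈ Ioo (0 : ℝ) 1)
    (hball : closedBall (0 : EuclideanSpace ℝ (Fin q)) r₀ ⊆ Ymu q g μ₀)
    (s₀ : ℝ)
    (hs₀ : ∀ w ∈ sphere (0 : EuclideanSpace ℝ (Fin q)) r₀, f w + (M / 2) * ‖w‖ ^ 2 ≤ s₀)
    (μ₁ : ℝ) (hμ₁ : μ₀ < μ₁) (hμ₁1 : μ₁ < 1)
    (hμ₁f : ∀ w ∈ K \ Ymu q g μ₁, 1 + s₀ ≤ f w + (M / 2) * ‖w‖ ^ 2)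
    (v : EuclideanSpace ℝ (Fin q)) (hv : v ∈ K \ Ymu q g μ₁)
    (w : EuclideanSpace ℝ (Fin q)) (hw : w ∈ Cplus q r₀ v ∩ K) (hwv : w ≠ v) :
    0 < ⟪gradient (fun y => f y + (M / 2) * ‖y‖ ^ 2) w, w - v⟫ := by
  obtain ⟨hvK, hvY⟩ := hv
  obtain ⟨hwC, hwK⟩ := hw
  set f₀ : EuclideanSpace ℝ (Fin q) → ℝ := fun y => f y + (M / 2) * ‖y‖ ^ 2 with hf₀_def
  have hcvx : ConvexOn ℝ K f₀ := hconv
  have hYsub : Ymu q g μ₀ ⊆ Ymu q g μ₁ :=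
    Set.image_mono (ball_subset_ball hμ₁.le)
  have hYK : Ymu q g μ₁ ⊆ K := Ymu_subset_K hKopen hKconv h0K hgbdry hμ₁1.le
  have hvr : r₀ < ‖v‖ := by
    by_contra h
    push_neg at h
    exact hvY (hYsub (hball (by simpa [mem_closedBall, dist_zero_right] using h)))
  have hv0 : (0:ℝ) < ‖v‖ := lt_trans hr₀ hvr
  obtain ⟨d, hd_def⟩ : ∃ d : EuclideanSpace ℝ (Fin q), d = w - v := ⟨_, rfl⟩
  have hd0 : d ≠ 0 := by rw [hd_def]; exact sub_ne_zero.2 hwv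
  have hdn : (0:ℝ) < ‖d‖ := norm_pos_iff.2 hd0
  -- extract the cone condition
  have hcone : Real.sqrt (1 - r₀ ^ 2 / ‖v‖ ^ 2) * (‖d‖ * ‖v‖) ≤ ⟪d, v⟫ := by
    have h := hwC
    simp only [Cplus, Cminus, Set.mem_setOf_eq] at h
    have harg : (2:ℝ) • v - w - v = -d := by rw [hd_def]; module
    rw [harg, norm_neg, inner_neg_neg] at h
    exact h
  obtain ⟨c, hc_def⟩ : ∃ c : ℝ, c = Real.sqrt (1 - r₀ ^ 2 / ‖v‖ ^ 2) := ⟨_, rfl⟩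
  rw [← hc_def] at hcone
  have hfrac : r₀ ^ 2 / ‖v‖ ^ 2 < 1 := (div_lt_one (by positivity)).2 (by nlinarith)
  have hcpos : 0 < c := by rw [hc_def]; exact Real.sqrt_pos.2 (by linarith)
  have hc2 : c ^ 2 * ‖v‖ ^ 2 = ‖v‖ ^ 2 - r₀ ^ 2 := by
    rw [hc_def, Real.sq_sqrt (by linarith : (0:ℝ) ≤ 1 - r₀ ^ 2 / ‖v‖ ^ 2)]
    field_simp
  obtain ⟨B, hB_def⟩ : ∃ B : ℝ, B = ⟪d, v⟫ := ⟨_, rfl⟩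
  rw [← hB_def] at hcone
  have hBpos : 0 < B := lt_of_lt_of_le (mul_pos hcpos (mul_pos hdn hv0)) hcone
  obtain ⟨A, hA_def⟩ : ∃ A : ℝ, A = ‖d‖ ^ 2 := ⟨_, rfl⟩
  obtain ⟨C, hC_def⟩ : ∃ C : ℝ, C = ‖v‖ ^ 2 - r₀ ^ 2 := ⟨_, rfl⟩
  have hApos : 0 < A := by rw [hA_def]; positivity
  have hCpos : 0 < C := by rw [hC_def]; nlinarith
  have hAC : A * C ≤ B ^ 2 := by
    have h2 := mul_self_le_mul_self (le_of_lt (mul_pos hcpos (mul_pos hdn hv0))) hcone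
    calc A * C = ‖d‖ ^ 2 * (c ^ 2 * ‖v‖ ^ 2) := by rw [hA_def, hc2, hC_def]
      _ = (c * (‖d‖ * ‖v‖)) * (c * (‖d‖ * ‖v‖)) := by ring
      _ ≤ B * B := h2
      _ = B ^ 2 := by ring
  obtain ⟨D, hD_def⟩ : ∃ D : ℝ, D = B ^ 2 - A * C := ⟨_, rfl⟩
  have hD0 : (0:ℝ) ≤ D := by rw [hD_def]; linarith
  have hsq : Real.sqrt D ^ 2 = D := Real.sq_sqrt hD0
  have hsqlt : Real.sqrt D < B := by
    have hlt : D < B ^ 2 := by rw [hD_def]; nlinarith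
    calc Real.sqrt D < Real.sqrt (B ^ 2) := Real.sqrt_lt_sqrt hD0 hlt
      _ = B := Real.sqrt_sq hBpos.le
  obtain ⟨s, hs_def⟩ : ∃ s : ℝ, s = (B - Real.sqrt D) / A := ⟨_, rfl⟩
  have hspos : 0 < s := by rw [hs_def]; exact div_pos (by linarith) hApos
  have hAs : A * s = B - Real.sqrt D := by
    rw [hs_def]; field_simp
  have hquad : A * s ^ 2 - 2 * B * s + C = 0 := by
    have hA0 : A ≠ 0 := ne_of_gt hApos
    have hquad' : A * (A * s ^ 2 - 2 * B * s + C) = 0 := by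
      linear_combination (A * s - B - Real.sqrt D) * hAs + hsq + hD_def
    exact (mul_eq_zero.1 hquad').resolve_left hA0
  obtain ⟨u, hu_def⟩ : ∃ u : EuclideanSpace ℝ (Fin q), u = v - s • d := ⟨_, rfl⟩
  have hu2 : ‖u‖ ^ 2 = r₀ ^ 2 := by
    have h1 : ‖u‖ ^ 2 = ‖v‖ ^ 2 - 2 * (s * B) + s ^ 2 * A := by
      rw [hu_def, hA_def, hB_def, norm_sub_sq_real, real_inner_smul_right,
        norm_smul, real_inner_comm, mul_pow, Real.norm_eq_abs, sq_abs]
      try ring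
    linear_combination h1 + hquad - hC_def
  have hu_norm : ‖u‖ = r₀ := by
    have h := hu2
    rw [sq, sq] at h
    rcases mul_self_eq_mul_self_iff.1 h with h' | h'
    · exact h'
    · linarith [norm_nonneg u]
  have huK : u ∈ K :=
    hYK (hYsub (hball (by simp [mem_closedBall, dist_zero_right, hu_norm])))
  have hus₀ : f₀ u ≤ s₀ := hs₀ u (by simp [mem_sphere, dist_zero_right, hu_norm])
  have h1s : (0:ℝ) < 1 + s := by linarith
  obtain ⟨θ, hθ_def⟩ : ∃ θ : ℝ, θ = s / (1 + s) := ⟨_, rfl⟩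
  have hθpos : 0 < θ := by rw [hθ_def]; exact div_pos hspos h1s
  have hθlt : θ < 1 := by rw [hθ_def]; exact (div_lt_one h1s).2 (by linarith)
  have h1θ : (1 - θ) * (1 + s) = 1 := by rw [hθ_def]; field_simp; ring
  have h2θ : θ * (1 + s) = s := by rw [hθ_def]; field_simp
  have hcombo : (1 - θ) • u + θ • w = v := by
    rw [hu_def, hd_def]
    match_scalars <;>
      first
        | linear_combination h1θ
        | linear_combination h2θ
        | linear_combination (2 + s) * h2θ
        | linear_combination (-(1 + s)) * h2θ
  have hconvv : f₀ v ≤ (1 - θ) * f₀ u + θ * f₀ w := by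
    have h := hcvx.2 huK hwK (show (0:ℝ) ≤ 1 - θ by linarith) hθpos.le
      (show (1 - θ) + θ = 1 by ring)
    rwa [hcombo] at h
  have hfv : 1 + s₀ ≤ f₀ v := hμ₁f v ⟨hvK, hvY⟩
  obtain ⟨Fu, hFu⟩ : ∃ x : ℝ, x = f₀ u := ⟨_, rfl⟩
  obtain ⟨Fv, hFv⟩ : ∃ x : ℝ, x = f₀ v := ⟨_, rfl⟩
  obtain ⟨Fw, hFw⟩ : ∃ x : ℝ, x = f₀ w := ⟨_, rfl⟩
  rw [← hFu] at hus₀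
  rw [← hFv] at hfv
  rw [← hFu, ← hFv, ← hFw] at hconvv
  have hfw_pos : 0 < Fw - Fu := arith_pos_of_combo hθpos hfv hconvv hus₀
  have hdiffw : DifferentiableAt ℝ f₀ w := by
    have h1 : DifferentiableAt ℝ f w :=
      (hf.differentiableOn (by norm_num)).differentiableAt (hKopen.mem_nhds hwK)
    have h2 : DifferentiableAt ℝ (fun y : EuclideanSpace ℝ (Fin q) => ‖y‖ ^ 2) w :=
      ((contDiff_norm_sq ℝ (n := 1)).differentiable (by norm_num)).differentiableAt
    exact h1.add (h2.const_mul _)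
  have hgrad : fderiv ℝ f₀ w (u - w) ≤ f₀ u - f₀ w :=
    fderiv_le_of_convexOn hcvx hwK huK hdiffw
  have hinner : ⟪gradient f₀ w, u - w⟫ = fderiv ℝ f₀ w (u - w) := by
    simp only [gradient]
    exact InnerProductSpace.toDual_symm_apply
  have hsplit : u - w = (-(1 + s)) • (w - v) := by
    rw [hu_def, hd_def]; module
  have h1 : ⟪gradient f₀ w, u - w⟫ = (-(1 + s)) * ⟪gradient f₀ w, w - v⟫ := by
    rw [hsplit, real_inner_smul_right]
  have h2 : (-(1 + s)) * ⟪gradient f₀ w, w - v⟫ ≤ Fu - Fw := by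
    rw [← h1, hinner, hFu, hFw]; exact hgrad
  exact arith_final h1s h2 hfw_pos
end
end

section
/- If v ∈ 𝒦 ∖ 𝒴_{μ₁} and ℓ is a ray contained in C_v^+ ∩ 𝒦 with initial point w and final point v, then f₀ decreases along ℓ (i.e., t ↦ f₀(w + t(v − w)) is decreasing for t ∈ [0,1]). -/
open Metric Set Filter Bornology
open scoped RealInnerProductSpace

noncomputable section

set_option maxHeartbeats 2000000

/-- If `v ∈ 𝒦 ∖ 𝒴_{μ₁}` and `ℓ` is a ray (segment) contained in
`C_v^+ ∩ 𝒦` with initial point `w` and final point `v`, then `f₀` decreases along `ℓ`,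
i.e. `t ↦ f₀(w + t(v - w))` is decreasing (antitone) on `[0,1]`, where
`f₀(y) = f(y) + (M/2)|y|²`. -/
theorem f0_antitone_along_ray
    (q : ℕ) (hq : 2 ≤ q) (K : Set (EuclideanSpace ℝ (Fin q)))
    (hKopen : IsOpen K) (hKbd : IsBounded K) (hKconv : Convex ℝ K)
    (h0K : (0 : EuclideanSpace ℝ (Fin q)) ∈ K)
    (g : EuclideanSpace ℝ (Fin q) → ℝ) (L : NNReal)
    (hgLip : LipschitzOnWith L g (sphere (0 : EuclideanSpace ℝ (Fin q)) 1))
    (hgpos : ∀ ν ∈ sphere (0 : EuclideanSpace ℝ (Fin q)) 1, 0 < g ν)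
    (hgbdry : ∀ ν ∈ sphere (0 : EuclideanSpace ℝ (Fin q)) 1, g ν • ν ∈ frontier K)
    (hgsurj : ∀ w ∈ frontier K,
      ∃ ν ∈ sphere (0 : EuclideanSpace ℝ (Fin q)) 1, w = g ν • ν)
    (f : EuclideanSpace ℝ (Fin q) → ℝ) (hf : ContDiffOn ℝ 2 f K)
    (M : ℝ) (hM : 0 ≤ M)
    (hconv : ConvexOn ℝ K (fun w => f w + (M / 2) * ‖w‖ ^ 2))
    (hblow : ∀ z ∈ frontier K, Filter.Tendsto f (nhdsWithin z K) Filter.atTop)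
    (r₀ : ℝ) (hr₀ : 0 < r₀)
    (μ₀ : ℝ) (hμ₀ : μ₀ ∈ Ioo (0 : ℝ) 1)
    (hball : closedBall (0 : EuclideanSpace ℝ (Fin q)) r₀ ⊆ Ymu q g μ₀)
    (s₀ : ℝ)
    (hs₀ : ∀ w ∈ sphere (0 : EuclideanSpace ℝ (Fin q)) r₀, f w + (M / 2) * ‖w‖ ^ 2 ≤ s₀)
    (μ₁ : ℝ) (hμ₁ : μ₀ < μ₁) (hμ₁1 : μ₁ < 1)
    (hμ₁f : ∀ w ∈ K \ Ymu q g μ₁, 1 + s₀ ≤ f w + (M / 2) * ‖w‖ ^ 2)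
    (v : EuclideanSpace ℝ (Fin q)) (hv : v ∈ K \ Ymu q g μ₁)
    (w : EuclideanSpace ℝ (Fin q)) (hseg : segment ℝ w v ⊆ Cplus q r₀ v ∩ K) :
    AntitoneOn (fun t : ℝ => f (w + t • (v - w)) + (M / 2) * ‖w + t • (v - w)‖ ^ 2)
      (Icc (0 : ℝ) 1) := by
  classical
  set f₀ : EuclideanSpace ℝ (Fin q) → ℝ := fun y => f y + (M / 2) * ‖y‖ ^ 2 with hf₀def
  obtain ⟨hvK, hvY⟩ := hv
  -- Ymu μ₀ ⊆ K
  have hYK : Ymu q g μ₀ ⊆ K := by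
    rintro y ⟨x, hx, rfl⟩
    rw [mem_ball_zero_iff] at hx
    by_cases hx0 : x = 0
    · simpa [Gmap, hx0] using h0K
    · have hxn : 0 < ‖x‖ := norm_pos_iff.mpr hx0
      set ν : EuclideanSpace ℝ (Fin q) := ‖x‖⁻¹ • x with hν
      have hνs : ν ∈ sphere (0 : EuclideanSpace ℝ (Fin q)) 1 := by
        rw [mem_sphere_zero_iff_norm, hν, norm_smul, norm_inv, norm_norm,
          inv_mul_cancel₀ hxn.ne']
      have hxν : x = ‖x‖ • ν := by
        rw [hν, smul_smul, mul_inv_cancel₀ hxn.ne', one_smul]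
      have hG : Gmap q g x = (1 - ‖x‖) • (0 : EuclideanSpace ℝ (Fin q)) + ‖x‖ • (g ν • ν) := by
        rw [Gmap, ← hν]
        rw [smul_zero, zero_add, smul_comm]
        exact congrArg _ hxν
      rw [hG, ← hKopen.interior_eq]
      exact hKconv.combo_interior_closure_mem_interior
        (by rwa [hKopen.interior_eq]) (frontier_subset_closure (hgbdry ν hνs))
        (by linarith [hμ₀.2, hx]) hxn.le (by ring)
  have hYmono : Ymu q g μ₀ ⊆ Ymu q g μ₁ :=
    Set.image_mono (ball_subset_ball hμ₁.le)
  -- ‖v‖ > r₀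
  have hvr : r₀ < ‖v‖ := by
    by_contra h
    push_neg at h
    exact hvY (hYmono (hball (by rwa [mem_closedBall_zero_iff])))
  have hv0 : (0 : ℝ) < ‖v‖ := lt_trans hr₀ hvr
  by_cases hwv : w = v
  · subst hwv
    intro a _ b _ _
    simp
  -- main case
  set u : EuclideanSpace ℝ (Fin q) := v - w with hu
  have hu0 : u ≠ 0 := sub_ne_zero.mpr (Ne.symm hwv)
  have hun : 0 < ‖u‖ := norm_pos_iff.mpr hu0
  have hwC : (2 : ℝ) • v - w ∈ Cminus q r₀ v := (hseg (left_mem_segment ℝ w v)).1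
  have huv : (2 : ℝ) • v - w - v = u := by rw [hu]; module
  have hc0 : Real.sqrt (1 - r₀ ^ 2 / ‖v‖ ^ 2) * (‖(2 : ℝ) • v - w - v‖ * ‖v‖)
      ≤ ⟪(2 : ℝ) • v - w - v, -v⟫ := hwC
  rw [huv] at hc0
  set c : ℝ := Real.sqrt (1 - r₀ ^ 2 / ‖v‖ ^ 2) with hcdef
  have hinner : ⟪u, -v⟫ = -⟪v, u⟫ := by
    rw [inner_neg_right, real_inner_comm]
  set b : ℝ := -⟪v, u⟫ with hbdef
  have hcb : c * (‖u‖ * ‖v‖) ≤ b := by rw [← hinner]; exact hc0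
  have hvu : ⟪v, u⟫ = -b := by rw [hbdef, neg_neg]
  have hle1 : r₀ ^ 2 / ‖v‖ ^ 2 < 1 := by
    rw [div_lt_one (by positivity)]
    exact pow_lt_pow_left₀ hvr hr₀.le two_ne_zero
  have hcpos : 0 < c := Real.sqrt_pos.mpr (by linarith)
  have hc2 : c ^ 2 = 1 - r₀ ^ 2 / ‖v‖ ^ 2 := Real.sq_sqrt (by linarith)
  have hbpos : 0 < b := lt_of_lt_of_le (mul_pos hcpos (mul_pos hun hv0)) hcb
  clear_value c b
  set A : ℝ := ‖u‖ ^ 2 with hAdef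
  set C : ℝ := ‖v‖ ^ 2 - r₀ ^ 2 with hCdef
  have hApos : 0 < A := by positivity
  have hCpos : 0 < C := by
    rw [hCdef]; nlinarith
  clear_value A C
  have hD : 0 ≤ b ^ 2 - A * C := by
    have h1 : c ^ 2 * (‖u‖ * ‖v‖) ^ 2 = A * C := by
      rw [hc2, hAdef, hCdef]
      field_simp
    nlinarith [mul_pos hcpos (mul_pos hun hv0), sq_nonneg (b - c * (‖u‖ * ‖v‖))]
  set s : ℝ := Real.sqrt (b ^ 2 - A * C) with hsdef
  have hs2 : s ^ 2 = b ^ 2 - A * C := Real.sq_sqrt hD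
  have hsnn : 0 ≤ s := Real.sqrt_nonneg _
  clear_value s
  have hsb : s < b := by nlinarith
  set t' : ℝ := (b - s) / A with ht'def
  have ht'pos : 0 < t' := div_pos (by linarith) hApos
  have hAt' : A * t' = b - s := by
    rw [ht'def]; field_simp
  set p : EuclideanSpace ℝ (Fin q) := v + t' • u with hpdef
  have hpsq : ‖p‖ ^ 2 = r₀ ^ 2 := by
    have h1 : ‖p‖ ^ 2 = ‖v‖ ^ 2 + 2 * (t' * ⟪v, u⟫) + t' ^ 2 * A := by
      rw [hpdef, norm_add_sq_real, real_inner_smul_right, norm_smul, hAdef]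
      rw [Real.norm_eq_abs, mul_pow, sq_abs]
    rw [h1, hvu]
    have hC' : ‖v‖ ^ 2 = C + r₀ ^ 2 := by rw [hCdef]; ring
    rw [hC']
    nlinarith [hAt', hs2, hApos.ne']
  have hpnorm : ‖p‖ = r₀ := by
    have := congrArg Real.sqrt hpsq
    rwa [Real.sqrt_sq (norm_nonneg _), Real.sqrt_sq hr₀.le] at this
  have hpK : p ∈ K := hYK (hball (by rw [mem_closedBall_zero_iff, hpnorm]))
  have hfp : f₀ p ≤ s₀ := hs₀ p (mem_sphere_zero_iff_norm.mpr hpnorm)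
  have hfv : 1 + s₀ ≤ f₀ v := hμ₁f v ⟨hvK, hvY⟩
  set T : ℝ := 1 + t' with hTdef
  set x : ℝ → EuclideanSpace ℝ (Fin q) := fun t => w + t • u with hxdef
  have hx1 : x 1 = v := by rw [hxdef]; simp [hu]
  have hxT : x T = p := by
    rw [hxdef, hTdef, hpdef, hu]; module
  have hxK : ∀ a ∈ Icc (0 : ℝ) 1, x a ∈ K := by
    intro a ha
    refine (hseg ?_).2
    rw [segment_eq_image']
    exact ⟨a, ha, rfl⟩
  have hmem : ∀ a c d : ℝ, a ≤ c → c ≤ d → a < d →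
      x c ∈ segment ℝ (x a) (x d) := by
    intro a c d hac hcd had
    rw [segment_eq_image']
    refine ⟨(c - a) / (d - a), ⟨div_nonneg (by linarith) (by linarith),
      (div_le_one (by linarith)).mpr (by linarith)⟩, ?_⟩
    have h1 : x d - x a = (d - a) • u := by
      show (w + d • u) - (w + a • u) = (d - a) • u
      module
    show x a + ((c - a) / (d - a)) • (x d - x a) = x c
    rw [h1, smul_smul, div_mul_cancel₀ _ (by linarith : d - a ≠ 0)]
    show w + a • u + (c - a) • u = w + c • u
    module
  intro a ha b' hb' hab
  simp only
  have hkey : f₀ (x b') ≤ f₀ (x a) := by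
    rcases eq_or_lt_of_le hab with h | hab'
    · rw [h]
    have hbT : b' < T := lt_of_le_of_lt hb'.2 (by rw [hTdef]; linarith)
    have h1 : f₀ (x 1) ≤ max (f₀ (x b')) (f₀ (x T)) :=
      hconv.le_on_segment (hxK b' hb') (by rw [hxT]; exact hpK)
        (hmem b' 1 T hb'.2 (by rw [hTdef]; linarith) hbT)
    rw [hx1, hxT] at h1
    have h2 : f₀ v ≤ f₀ (x b') := by
      rcases le_max_iff.mp h1 with h | h
      · exact h
      · exfalso; linarith
    have h3 : f₀ (x b') ≤ max (f₀ (x a)) (f₀ (x T)) :=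
      hconv.le_on_segment (hxK a ha) (by rw [hxT]; exact hpK)
        (hmem a b' T hab (le_of_lt hbT) (lt_trans hab' hbT))
    rw [hxT] at h3
    rcases le_max_iff.mp h3 with h | h
    · exact h
    · exfalso; linarith
  exact hkey
end
end

section
/- Let 𝒦 be an open bounded convex set in ℝ^q and f ∈ C¹(𝒦) with f(v) → ∞ as v → ∂𝒦 with v ∈ 𝒦. Let u: [α, β] → clos 𝒦 be absolutely continuous with u(θ) ∈ 𝒦 for all θ ∈ [α, β). If ∫_α^β |∇f(u(θ)) · u′(θ)| dθ < ∞, then u(β) ∈ 𝒦. -/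
open MeasureTheory Metric Set Filter Bornology
open scoped RealInnerProductSpace

noncomputable section

set_option maxHeartbeats 2000000

/-- Let `𝒦` be an open bounded convex set in `ℝ^q` and `f ∈ C¹(𝒦)` with
`f(v) → ∞` as `v → ∂𝒦` within `𝒦`.  Let `u : [α, β] → clos 𝒦` be absolutely continuous
(encoded: `u` is the indefinite integral of an integrable `u'`) with `u(θ) ∈ 𝒦` for all
`θ ∈ [α, β)`.  If `∫_α^β |∇f(u(θ)) · u'(θ)| dθ < ∞`, then `u(β) ∈ 𝒦`. -/
theorem endpoint_mem_of_integrable_gradient_along_path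
    (q : ℕ) (K : Set (EuclideanSpace ℝ (Fin q)))
    (hKopen : IsOpen K) (hKbd : IsBounded K) (hKconv : Convex ℝ K)
    (f : EuclideanSpace ℝ (Fin q) → ℝ) (hf : ContDiffOn ℝ 1 f K)
    (hblow : ∀ z ∈ frontier K, Tendsto f (nhdsWithin z K) atTop)
    (α β : ℝ) (hαβ : α < β)
    (u u' : ℝ → EuclideanSpace ℝ (Fin q))
    (hu'int : IntegrableOn u' (Icc α β))
    (hAC : ∀ θ ∈ Icc α β, u θ = u α + ∫ s in α..θ, u' s)
    (huK : ∀ θ ∈ Icc α β, u θ ∈ closure K)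
    (huKin : ∀ θ ∈ Ico α β, u θ ∈ K)
    (hint : IntegrableOn (fun θ => ⟪gradient f (u θ), u' θ⟫) (Icc α β)) :
    u β ∈ K := by
  classical
  set G : EuclideanSpace ℝ (Fin q) → EuclideanSpace ℝ (Fin q) := gradient f with hG
  set w : ℝ → ℝ := fun θ => ⟪G (u θ), u' θ⟫ with hw
  -- continuity of `u` on `[α, β]`
  have hucont : ContinuousOn u (Icc α β) := by
    have h1 : ContinuousOn (fun θ => u α + ∫ t in Ioc α θ, u' t) (Icc α β) :=
      continuousOn_const.add (intervalIntegral.continuousOn_primitive hu'int)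
    refine h1.congr fun θ hθ => ?_
    rw [hAC θ hθ, intervalIntegral.integral_of_le hθ.1]
  -- gradient facts
  have hfdiff : ∀ x ∈ K, DifferentiableAt ℝ f x := fun x hx =>
    (hf.differentiableOn one_ne_zero).differentiableAt (hKopen.mem_nhds hx)
  have hfderiv : ∀ (x v : EuclideanSpace ℝ (Fin q)), ⟪G x, v⟫ = fderiv ℝ f x v := fun x v =>
    InnerProductSpace.toDual_symm_apply
  have hGcont : ContinuousOn G K := by
    have h1 : ContinuousOn (fderiv ℝ f) K := hf.continuousOn_fderiv_of_isOpen hKopen le_rfl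
    exact (InnerProductSpace.toDual ℝ (EuclideanSpace ℝ (Fin q))).symm.continuous.comp_continuousOn h1
  have hfcont : ContinuousOn f K := hf.continuousOn
  -- the main bound
  set M : ℝ := f (u α) + ∫ θ in Icc α β, |w θ| with hM
  have key : ∀ θ₀ ∈ Ico α β, f (u θ₀) ≤ M := by
    intro θ₀ hθ₀
    refine le_of_forall_pos_le_add fun δ hδ => ?_
    have hαθ₀ : α ≤ θ₀ := hθ₀.1
    have hθ₀β : θ₀ < β := hθ₀.2
    have hIccsub : Icc α θ₀ ⊆ Ico α β := fun θ hθ => ⟨hθ.1, lt_of_le_of_lt hθ.2 hθ₀β⟩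
    have hIccsub' : Icc α θ₀ ⊆ Icc α β := fun θ hθ => ⟨hθ.1, le_trans hθ.2 hθ₀β.le⟩
    -- compact neighborhood of the path
    set S : Set (EuclideanSpace ℝ (Fin q)) := u '' Icc α θ₀ with hS
    have hScomp : IsCompact S := isCompact_Icc.image_of_continuousOn (hucont.mono hIccsub')
    have hSK : S ⊆ K := by
      rintro x ⟨θ, hθ, rfl⟩
      exact huKin θ (hIccsub hθ)
    obtain ⟨ε, hεpos, hεsub⟩ := hScomp.exists_thickening_subset_open hKopen hSK
    set T : Set (EuclideanSpace ℝ (Fin q)) := cthickening (ε / 2) S with hT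
    have hTK : T ⊆ K :=
      (cthickening_subset_thickening' hεpos (half_lt_self hεpos) S).trans hεsub
    have hTcomp : IsCompact T := hScomp.cthickening
    have hST : S ⊆ T := self_subset_cthickening S
    have huαS : u α ∈ S := mem_image_of_mem u ⟨le_rfl, hαθ₀⟩
    -- bound on the gradient on T
    obtain ⟨M₁, hM₁⟩ := hTcomp.exists_bound_of_continuousOn (hGcont.mono hTK)
    have hM₁0 : 0 ≤ M₁ := le_trans (norm_nonneg _) (hM₁ (u α) (hST huαS))
    -- integrals of ‖u'‖
    set C : ℝ := ∫ θ in Icc α θ₀, ‖u' θ‖ with hC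
    have hu'θ₀ : IntegrableOn u' (Icc α θ₀) := hu'int.mono_set hIccsub'
    have hC0 : 0 ≤ C := integral_nonneg fun _ => norm_nonneg _
    set δ' : ℝ := δ / (4 * (C + 1)) with hδ'def
    have hδ' : 0 < δ' := by positivity
    -- moduli of uniform continuity on T
    have hfu : UniformContinuousOn f T :=
      hTcomp.uniformContinuousOn_of_continuous (hfcont.mono hTK)
    have hGu : UniformContinuousOn G T :=
      hTcomp.uniformContinuousOn_of_continuous (hGcont.mono hTK)
    obtain ⟨η₁, hη₁, Hf⟩ := Metric.uniformContinuousOn_iff.1 hfu (δ / 4) (by positivity)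
    obtain ⟨η₂, hη₂, HG⟩ := Metric.uniformContinuousOn_iff.1 hGu δ' hδ'
    set κ : ℝ := min (min (η₁ / 2) (η₂ / 2)) (min 1 (min (ε / 2) (δ / (4 * (M₁ + 1))))) with hκ
    have hκpos : 0 < κ := by positivity
    have hκη₁ : κ < η₁ := lt_of_le_of_lt ((min_le_left _ _).trans (min_le_left _ _)) (by linarith)
    have hκη₂ : κ < η₂ := lt_of_le_of_lt ((min_le_left _ _).trans (min_le_right _ _)) (by linarith)
    have hκ1 : κ ≤ 1 := (min_le_right _ _).trans (min_le_left _ _)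
    have hκε : κ ≤ ε / 2 := (min_le_right _ _).trans ((min_le_right _ _).trans (min_le_left _ _))
    have hκM : κ ≤ δ / (4 * (M₁ + 1)) :=
      (min_le_right _ _).trans ((min_le_right _ _).trans (min_le_right _ _))
    -- continuous approximation of u'
    set v : ℝ → EuclideanSpace ℝ (Fin q) := (Icc α θ₀).indicator u' with hv
    have hvint : Integrable v := hu'θ₀.integrable_indicator measurableSet_Icc
    obtain ⟨g, -, hgκ, hgcont, hgint⟩ := hvint.exists_hasCompactSupport_integral_sub_le hκpos
    have hdiffint : IntegrableOn (fun θ => ‖u' θ - g θ‖) (Icc α θ₀) :=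
      (hu'θ₀.sub hgint.integrableOn).norm
    have hgu' : ∫ θ in Icc α θ₀, ‖u' θ - g θ‖ ≤ κ := by
      have h1 : ∫ θ in Icc α θ₀, ‖u' θ - g θ‖ = ∫ θ in Icc α θ₀, ‖v θ - g θ‖ :=
        setIntegral_congr_fun measurableSet_Icc fun θ hθ => by
          rw [hv, indicator_of_mem hθ]
      have h2 : ∫ θ in Icc α θ₀, ‖v θ - g θ‖ ≤ ∫ θ, ‖v θ - g θ‖ :=
        setIntegral_le_integral (hvint.sub hgint).norm
          (Eventually.of_forall fun θ => norm_nonneg _)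
      linarith
    -- the smooth approximate path
    set U : ℝ → EuclideanSpace ℝ (Fin q) := fun θ => u α + ∫ s in α..θ, g s with hU
    have hUderiv : ∀ θ, HasDerivAt U (g θ) θ := fun θ =>
      ((hgcont.integral_hasStrictDerivAt α θ).hasDerivAt).const_add (u α)
    have hUcont : Continuous U := continuous_iff_continuousAt.2 fun θ => (hUderiv θ).continuousAt
    have hUα : U α = u α := by simp [hU]
    -- interval integrabilities
    have hgii : ∀ θ, IntervalIntegrable g volume α θ := fun θ => hgcont.intervalIntegrable α θ
    have hclose : ∀ θ ∈ Icc α θ₀, ‖U θ - u θ‖ ≤ κ := by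
      intro θ hθ
      have hu'ii : IntervalIntegrable u' volume α θ := by
        refine IntegrableOn.intervalIntegrable ?_
        rw [uIcc_of_le hθ.1]
        exact hu'θ₀.mono_set (Icc_subset_Icc le_rfl hθ.2)
      have h1 : U θ - u θ = ∫ s in α..θ, (g s - u' s) := by
        simp only [hU, hAC θ (hIccsub' hθ), intervalIntegral.integral_sub (hgii θ) hu'ii]
        abel
      have h2 : ‖∫ s in α..θ, (g s - u' s)‖ ≤ ∫ s in α..θ, ‖g s - u' s‖ :=
        intervalIntegral.norm_integral_le_integral_norm hθ.1
      have h3 : ∫ s in α..θ, ‖g s - u' s‖ = ∫ s in Ioc α θ, ‖g s - u' s‖ :=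
        intervalIntegral.integral_of_le hθ.1
      have h4 : ∫ s in Ioc α θ, ‖g s - u' s‖ ≤ ∫ s in Icc α θ₀, ‖g s - u' s‖ := by
        refine setIntegral_mono_set ((hgint.integrableOn.sub hu'θ₀).norm) ?_ ?_
        · exact Eventually.of_forall fun s => norm_nonneg _
        · exact HasSubset.Subset.eventuallyLE ((Ioc_subset_Icc_self).trans
            (Icc_subset_Icc le_rfl hθ.2))
      have h5 : ∫ s in Icc α θ₀, ‖g s - u' s‖ = ∫ s in Icc α θ₀, ‖u' s - g s‖ :=
        setIntegral_congr_fun measurableSet_Icc fun s _ => norm_sub_rev _ _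
      rw [h1]
      calc ‖∫ s in α..θ, (g s - u' s)‖ ≤ ∫ s in Icc α θ₀, ‖u' s - g s‖ := by
            rw [← h5]; rw [h3] at h2; linarith
        _ ≤ κ := hgu'
    have hUT : ∀ θ ∈ Icc α θ₀, U θ ∈ T := by
      intro θ hθ
      refine mem_cthickening_of_dist_le (U θ) (u θ) (ε / 2) S (mem_image_of_mem u hθ) ?_
      rw [dist_eq_norm]
      exact (hclose θ hθ).trans hκε
    have hUK : ∀ θ ∈ Icc α θ₀, U θ ∈ K := fun θ hθ => hTK (hUT θ hθ)
    -- FTC for the approximate path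
    set A : ℝ → ℝ := fun θ => ⟪G (U θ), g θ⟫ with hA
    have hAcont : ContinuousOn A (Icc α θ₀) :=
      ContinuousOn.inner (((hGcont.mono hTK).comp hUcont.continuousOn) fun θ hθ => hUT θ hθ)
        hgcont.continuousOn
    have hAii : IntervalIntegrable A volume α θ₀ := by
      refine ContinuousOn.intervalIntegrable ?_
      rwa [uIcc_of_le hαθ₀]
    have hFTC : ∫ s in α..θ₀, A s = f (U θ₀) - f (U α) := by
      refine intervalIntegral.integral_eq_sub_of_hasDerivAt (f := fun θ => f (U θ)) (fun θ hθ => ?_) hAii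
      rw [uIcc_of_le hαθ₀] at hθ
      have h1 : HasFDerivAt f (fderiv ℝ f (U θ)) (U θ) := (hfdiff _ (hUK θ hθ)).hasFDerivAt
      have h2 := h1.comp_hasDerivAt θ (hUderiv θ)
      have h3 : A θ = fderiv ℝ f (U θ) (g θ) := hfderiv _ _
      rw [h3]
      exact h2
    -- integrability on Icc α θ₀
    have hwint : IntegrableOn w (Icc α θ₀) := hint.mono_set hIccsub'
    have hAint : IntegrableOn A (Icc α θ₀) := hAcont.integrableOn_compact isCompact_Icc
    have hgnormint : IntegrableOn (fun θ => ‖g θ‖) (Icc α θ₀) := hgint.norm.integrableOn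
    have hDint : IntegrableOn (fun θ => |A θ - w θ|) (Icc α θ₀) := (hAint.sub hwint).abs
    have hwabs : IntegrableOn (fun θ => |w θ|) (Icc α θ₀) := hwint.abs
    -- pointwise bounds
    have hptA : ∀ θ ∈ Icc α θ₀, A θ ≤ |w θ| + |A θ - w θ| := by
      intro θ _
      have h1 := le_abs_self (w θ)
      have h2 := le_abs_self (A θ - w θ)
      linarith
    have hptE : ∀ θ ∈ Icc α θ₀, |A θ - w θ| ≤ δ' * ‖g θ‖ + M₁ * ‖u' θ - g θ‖ := by
      intro θ hθ
      have huθS : u θ ∈ S := mem_image_of_mem u hθ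
      have h1 : A θ - w θ = ⟪G (U θ) - G (u θ), g θ⟫ + ⟪G (u θ), g θ - u' θ⟫ := by
        rw [hA, hw]
        rw [inner_sub_left, inner_sub_right]
        ring
      have h2 : ‖G (U θ) - G (u θ)‖ ≤ δ' := by
        have := HG (U θ) (hUT θ hθ) (u θ) (hST huθS) (by
          rw [dist_eq_norm]; exact lt_of_le_of_lt (hclose θ hθ) hκη₂)
        rw [dist_eq_norm] at this
        exact this.le
      have h3 : ‖G (u θ)‖ ≤ M₁ := hM₁ _ (hST huθS)
      calc |A θ - w θ| ≤ |⟪G (U θ) - G (u θ), g θ⟫| + |⟪G (u θ), g θ - u' θ⟫| := by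
            rw [h1]; exact abs_add_le _ _
        _ ≤ ‖G (U θ) - G (u θ)‖ * ‖g θ‖ + ‖G (u θ)‖ * ‖g θ - u' θ‖ :=
            add_le_add (abs_real_inner_le_norm _ _) (abs_real_inner_le_norm _ _)
        _ ≤ δ' * ‖g θ‖ + M₁ * ‖u' θ - g θ‖ := by
            rw [norm_sub_rev (g θ) (u' θ)]
            exact add_le_add (mul_le_mul_of_nonneg_right h2 (norm_nonneg _))
              (mul_le_mul_of_nonneg_right h3 (norm_nonneg _))
    have hptg : ∀ θ ∈ Icc α θ₀, ‖g θ‖ ≤ ‖u' θ‖ + ‖u' θ - g θ‖ := by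
      intro θ _
      calc ‖g θ‖ = ‖u' θ - (u' θ - g θ)‖ := by rw [sub_sub_cancel]
        _ ≤ ‖u' θ‖ + ‖u' θ - g θ‖ := norm_sub_le _ _
    -- integral inequalities
    have hintg : ∫ θ in Icc α θ₀, ‖g θ‖ ≤ C + κ := by
      have h1 : ∫ θ in Icc α θ₀, ‖g θ‖ ≤ ∫ θ in Icc α θ₀, (‖u' θ‖ + ‖u' θ - g θ‖) :=
        setIntegral_mono_on hgnormint (hu'θ₀.norm.add hdiffint) measurableSet_Icc hptg
      rw [integral_add hu'θ₀.norm hdiffint] at h1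
      have := hgu'
      rw [hC]
      linarith
    have hEbound : ∫ θ in Icc α θ₀, |A θ - w θ| ≤ δ' * (C + κ) + M₁ * κ := by
      have h1 : ∫ θ in Icc α θ₀, |A θ - w θ|
          ≤ ∫ θ in Icc α θ₀, (δ' * ‖g θ‖ + M₁ * ‖u' θ - g θ‖) :=
        setIntegral_mono_on hDint
          ((hgnormint.const_mul δ').add (hdiffint.const_mul M₁)) measurableSet_Icc hptE
      rw [integral_add (hgnormint.const_mul δ') (hdiffint.const_mul M₁),
        integral_const_mul, integral_const_mul] at h1
      have h2 : δ' * ∫ θ in Icc α θ₀, ‖g θ‖ ≤ δ' * (C + κ) :=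
        mul_le_mul_of_nonneg_left hintg hδ'.le
      have h3 : M₁ * ∫ θ in Icc α θ₀, ‖u' θ - g θ‖ ≤ M₁ * κ :=
        mul_le_mul_of_nonneg_left hgu' hM₁0
      linarith
    have hI₀ : ∫ θ in Icc α θ₀, |w θ| ≤ ∫ θ in Icc α β, |w θ| := by
      refine setIntegral_mono_set hint.abs ?_ ?_
      · exact Eventually.of_forall fun θ => abs_nonneg _
      · exact HasSubset.Subset.eventuallyLE hIccsub'
    have hIA : (∫ θ in Icc α θ₀, A θ)
        ≤ (∫ θ in Icc α β, |w θ|) + (δ' * (C + κ) + M₁ * κ) := by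
      have h1 : ∫ θ in Icc α θ₀, A θ ≤ ∫ θ in Icc α θ₀, (|w θ| + |A θ - w θ|) :=
        setIntegral_mono_on hAint (hwabs.add hDint) measurableSet_Icc hptA
      rw [integral_add hwabs hDint] at h1
      linarith
    -- comparing f (u θ₀) and f (U θ₀)
    have hfclose : f (u θ₀) ≤ f (U θ₀) + δ / 4 := by
      have hθ₀mem : θ₀ ∈ Icc α θ₀ := ⟨hαθ₀, le_rfl⟩
      have := Hf (u θ₀) (hST (mem_image_of_mem u hθ₀mem)) (U θ₀) (hUT θ₀ hθ₀mem) (by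
        rw [dist_eq_norm, norm_sub_rev]
        exact lt_of_le_of_lt (hclose θ₀ hθ₀mem) hκη₁)
      rw [Real.dist_eq] at this
      have := abs_lt.1 this
      linarith [this.2]
    -- convert interval integral to set integral
    have hIconv : ∫ s in α..θ₀, A s = ∫ θ in Icc α θ₀, A θ := by
      rw [intervalIntegral.integral_of_le hαθ₀, integral_Icc_eq_integral_Ioc]
    -- final numeric estimates
    have hb1 : δ' * (C + κ) ≤ δ / 4 := by
      have h1 : δ' * (C + κ) ≤ δ' * (C + 1) :=
        mul_le_mul_of_nonneg_left (by linarith) hδ'.le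
      have h2 : δ' * (C + 1) = δ / 4 := by
        rw [hδ'def]; field_simp
      linarith
    have hb2 : M₁ * κ ≤ δ / 4 := by
      have h1 : M₁ * κ ≤ M₁ * (δ / (4 * (M₁ + 1))) := mul_le_mul_of_nonneg_left hκM hM₁0
      have h2 : M₁ * (δ / (4 * (M₁ + 1))) ≤ δ / 4 := by
        rw [show M₁ * (δ / (4 * (M₁ + 1))) = (M₁ * δ) / (4 * (M₁ + 1)) from by ring,
          div_le_div_iff₀ (by positivity) (by norm_num : (0:ℝ) < 4)]
        nlinarith
      linarith
    have hend : f (U θ₀) = f (u α) + ∫ s in α..θ₀, A s := by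
      rw [hFTC, hUα]; ring
    rw [hM]
    calc f (u θ₀) ≤ f (U θ₀) + δ / 4 := hfclose
      _ = f (u α) + (∫ θ in Icc α θ₀, A θ) + δ / 4 := by rw [hend, hIconv]
      _ ≤ f (u α) + ((∫ θ in Icc α β, |w θ|) + (δ' * (C + κ) + M₁ * κ)) + δ / 4 := by linarith
      _ ≤ f (u α) + (∫ θ in Icc α β, |w θ|) + δ := by linarith
  -- contradiction if u β ∈ frontier K
  by_contra hβK
  have hfront : u β ∈ frontier K := by
    have h1 : u β ∈ closure K := huK β ⟨hαβ.le, le_rfl⟩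
    rw [hKopen.frontier_eq]
    exact ⟨h1, hβK⟩
  have htop := hblow (u β) hfront
  have hcwa : ContinuousWithinAt u (Ico α β) β :=
    ((hucont β ⟨hαβ.le, le_rfl⟩).mono Ico_subset_Icc_self)
  have hmap : Tendsto u (nhdsWithin β (Ico α β)) (nhdsWithin (u β) K) := by
    rw [tendsto_nhdsWithin_iff]
    exact ⟨hcwa, eventually_mem_nhdsWithin.mono fun θ hθ => huKin θ hθ⟩
  have hcomp : Tendsto (fun θ => f (u θ)) (nhdsWithin β (Ico α β)) atTop := htop.comp hmap
  haveI hne : (nhdsWithin β (Ico α β)).NeBot := by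
    apply mem_closure_iff_nhdsWithin_neBot.1
    rw [closure_Ico hαβ.ne]
    exact ⟨hαβ.le, le_rfl⟩
  have hev : ∀ᶠ θ in nhdsWithin β (Ico α β), M < f (u θ) :=
    hcomp.eventually (eventually_gt_atTop M)
  have hev2 : ∀ᶠ θ in nhdsWithin β (Ico α β), θ ∈ Ico α β := eventually_mem_nhdsWithin
  obtain ⟨θ, h1, h2⟩ := (hev.and hev2).exists
  exact absurd (key θ h2) (not_le.2 h1)
end
end
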